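/- For every connected graph G and every edge e of G, b_g(G) ≤ b_g(G − e) ≤ b_g(G) + 2, and similarly b_g'(G) ≤ b_g'(G − e) ≤ b_g'(G) + 2. -/
import Mathlib


namespace BurningGame

/-- One spreading phase: all neighbors of burned vertices become burned. -/
noncomputable def spread {V : Type*} [Fintype V] [DecidableEq V] (G : SimpleGraph V) (B : Finset V) : Finset V :=
  ((↑B : Set V) ∪ {v | ∃ u ∈ B, G.Adj u v}).toFinite.toFinset

/-- `EndBy G turn i B k`: starting from burned set `B` at round index `i`
(the player selecting in round `i` is Burner iff `turn i = true`; Burner's selections are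
quantified existentially, Staller's universally), Burner can force the game to end
within `k` further rounds. -/
def EndBy {V : Type*} [Fintype V] [DecidableEq V] (G : SimpleGraph V) (turn : ℕ → Bool) :
    ℕ → Finset V → ℕ → Prop
  | _, B, 0 => B = Finset.univ
  | i, B, k + 1 => B = Finset.univ ∨
      spread G B = Finset.univ ∨
      (if turn i then ∃ v ∉ spread G B, EndBy G turn (i + 1) (insert v (spread G B)) k
       else ∀ v ∉ spread G B, EndBy G turn (i + 1) (insert v (spread G B)) k)

/-- Game burning number relative to a preburned set `S` (Burner starts). -/
noncomputable def bgRel {V : Type*} [Fintype V] [DecidableEq V] (G : SimpleGraph V) (S : Finset V) : ℕ :=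
  sInf {k | EndBy G (fun i => i % 2 == 0) 0 S k}

/-- The game burning number (Burner starts). -/
noncomputable def bg {V : Type*} [Fintype V] [DecidableEq V] (G : SimpleGraph V) : ℕ := bgRel G ∅

/-- The Staller-start game burning number. -/
noncomputable def bg' {V : Type*} [Fintype V] [DecidableEq V] (G : SimpleGraph V) : ℕ :=
  sInf {k | EndBy G (fun i => i % 2 == 1) 0 ∅ k}

/-- The burning number: only Burner plays. -/
noncomputable def burn {V : Type*} [Fintype V] [DecidableEq V] (G : SimpleGraph V) : ℕ :=
  sInf {k | EndBy G (fun _ => true) 0 ∅ k}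

/-- The cooling number: only Staller plays. -/
noncomputable def cool {V : Type*} [Fintype V] [DecidableEq V] (G : SimpleGraph V) : ℕ :=
  sInf {k | EndBy G (fun _ => false) 0 ∅ k}

section Aux

variable {V : Type*} [Fintype V] [DecidableEq V]

lemma mem_spread {G : SimpleGraph V} {B : Finset V} {w : V} :
    w ∈ spread G B ↔ w ∈ B ∨ ∃ u ∈ B, G.Adj u w := by
  simp [spread]

lemma subset_spread (G : SimpleGraph V) (B : Finset V) : B ⊆ spread G B :=
  fun _ hx => mem_spread.mpr (Or.inl hx)

lemma spread_mono {G : SimpleGraph V} {B B' : Finset V} (h : B ⊆ B') :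
    spread G B ⊆ spread G B' := by
  intro x hx
  rcases mem_spread.mp hx with hx | ⟨a, ha, hadj⟩
  · exact mem_spread.mpr (Or.inl (h hx))
  · exact mem_spread.mpr (Or.inr ⟨a, h ha, hadj⟩)

lemma spread_mono_graph {H G : SimpleGraph V} (hHG : H ≤ G) {B : Finset V} :
    spread H B ⊆ spread G B := by
  intro x hx
  rcases mem_spread.mp hx with hx | ⟨a, ha, hadj⟩
  · exact mem_spread.mpr (Or.inl hx)
  · exact mem_spread.mpr (Or.inr ⟨a, ha, hHG hadj⟩)

lemma endBy_zero {G : SimpleGraph V} {turn : ℕ → Bool} {i : ℕ} {B : Finset V} :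
    EndBy G turn i B 0 ↔ B = Finset.univ := Iff.rfl

lemma endBy_succ {G : SimpleGraph V} {turn : ℕ → Bool} {i : ℕ} {B : Finset V} {k : ℕ} :
    EndBy G turn i B (k+1) ↔ (B = Finset.univ ∨
      spread G B = Finset.univ ∨
      (if turn i then ∃ v ∉ spread G B, EndBy G turn (i + 1) (insert v (spread G B)) k
       else ∀ v ∉ spread G B, EndBy G turn (i + 1) (insert v (spread G B)) k)) := Iff.rfl

lemma exists_not_mem_of_ne_univ {s : Finset V} (h : s ≠ Finset.univ) : ∃ a, a ∉ s := by
  by_contra hc; push_neg at hc; exact h (Finset.eq_univ_iff_forall.mpr hc)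

/-- If at most `n` vertices are unburned, the game ends within `n` rounds
regardless of who plays. -/
lemma endBy_of_card {G : SimpleGraph V} (turn : ℕ → Bool) :
    ∀ n i (B : Finset V), (Finset.univ \ B).card ≤ n → EndBy G turn i B n := by
  intro n
  induction n with
  | zero =>
    intro i B h
    have h0 : Finset.univ \ B = ∅ := Finset.card_eq_zero.mp (Nat.le_zero.mp h)
    exact endBy_zero.mpr (Finset.univ_subset_iff.mp (Finset.sdiff_eq_empty_iff_subset.mp h0))
  | succ n ih =>
    intro i B h
    rw [endBy_succ]
    by_cases hsp : spread G B = Finset.univ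
    · exact Or.inr (Or.inl hsp)
    have key : ∀ w ∉ spread G B, (Finset.univ \ insert w (spread G B)).card ≤ n := by
      intro w hw
      have hwB : w ∈ Finset.univ \ B :=
        Finset.mem_sdiff.mpr ⟨Finset.mem_univ w, fun c => hw (subset_spread G B c)⟩
      have hsub : Finset.univ \ insert w (spread G B) ⊆ (Finset.univ \ B).erase w := by
        intro x hx
        rcases Finset.mem_sdiff.mp hx with ⟨hx1, hx2⟩
        refine Finset.mem_erase.mpr ⟨fun c => hx2 (by rw [c]; exact Finset.mem_insert_self _ _),
          Finset.mem_sdiff.mpr ⟨hx1, fun c =>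
            hx2 (Finset.mem_insert_of_mem (subset_spread G B c))⟩⟩
      have := Finset.card_le_card hsub
      rw [Finset.card_erase_of_mem hwB] at this
      omega
    obtain ⟨w, hw⟩ := exists_not_mem_of_ne_univ hsp
    right; right
    cases hb : turn i with
    | true => rw [if_pos rfl]; exact ⟨w, hw, ih _ _ (key w hw)⟩
    | false => rw [if_neg Bool.false_ne_true]; exact fun w' hw' => ih _ _ (key w' hw')

/-- Monotonicity: a game winnable in `k` rounds on a subgraph from a smaller burned set
is winnable in `k` rounds on the larger graph from a larger burned set. -/
lemma endBy_mono {H G : SimpleGraph V} (hHG : H ≤ G) (turn : ℕ → Bool) :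
    ∀ k i (B B' : Finset V), B ⊆ B' → EndBy H turn i B k → EndBy G turn i B' k := by
  intro k
  induction k with
  | zero =>
    intro i B B' hBB' h
    exact endBy_zero.mpr (Finset.univ_subset_iff.mp (endBy_zero.mp h ▸ hBB'))
  | succ k ih =>
    intro i B B' hBB' h
    have hsp : spread H B ⊆ spread G B' :=
      fun x hx => spread_mono hBB' (spread_mono_graph hHG hx)
    rw [endBy_succ] at h ⊢
    rcases h with rfl | h | h
    · exact Or.inl (Finset.univ_subset_iff.mp hBB')
    · exact Or.inr (Or.inl (Finset.univ_subset_iff.mp (h ▸ hsp)))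
    · by_cases hU : spread G B' = Finset.univ
      · exact Or.inr (Or.inl hU)
      right; right
      cases hb : turn i with
      | true =>
        rw [hb] at h; rw [if_pos rfl] at h ⊢
        obtain ⟨x, hx, hrec⟩ := h
        by_cases hx' : x ∈ spread G B'
        · obtain ⟨w, hw⟩ := exists_not_mem_of_ne_univ hU
          refine ⟨w, hw, ih _ _ _ ?_ hrec⟩
          intro y hy
          rcases Finset.mem_insert.mp hy with rfl | hy
          · exact Finset.mem_insert_of_mem hx'
          · exact Finset.mem_insert_of_mem (hsp hy)
        · exact ⟨x, hx', ih _ _ _ (Finset.insert_subset_insert _ hsp) hrec⟩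
      | false =>
        rw [hb] at h; rw [if_neg Bool.false_ne_true] at h ⊢
        intro w hw
        exact ih _ _ _ (Finset.insert_subset_insert _ hsp)
          (h w (fun c => hw (hsp c)))

end Aux

section Del

variable {V : Type*} [Fintype V] [DecidableEq V] {G : SimpleGraph V} {u v : V}

/-- A vertex reached by spreading in `G` but not in `G - uv` must be an endpoint of
the deleted edge, with the other endpoint already burned. -/
lemma gap_lemma {B : Finset V} {w : V}
    (hw : w ∈ spread G B) (hw' : w ∉ spread (G.deleteEdges {s(u,v)}) B) :
    (w = u ∧ v ∈ B) ∨ (w = v ∧ u ∈ B) := by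
  rcases mem_spread.mp hw with hwB | ⟨a, ha, hadj⟩
  · exact absurd (subset_spread _ _ hwB) hw'
  · by_cases hH : (G.deleteEdges {s(u,v)}).Adj a w
    · exact absurd (mem_spread.mpr (Or.inr ⟨a, ha, hH⟩)) hw'
    · rw [SimpleGraph.deleteEdges_adj] at hH
      have he : s(a,w) = s(u,v) := by
        by_contra hne
        exact hH ⟨hadj, by simpa using hne⟩
      rcases Sym2.eq_iff.mp he with ⟨rfl, rfl⟩ | ⟨rfl, rfl⟩
      · exact Or.inr ⟨rfl, ha⟩
      · exact Or.inl ⟨rfl, ha⟩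

/-- Either spreading in `G` from `I` stays inside spreading in `G - uv` from `R ⊇ I`,
or there is a single "lag" endpoint `l` of the deleted edge. -/
lemma gap_cases {I R : Finset V} (hIR : I ⊆ R) :
    spread G I ⊆ spread (G.deleteEdges {s(u,v)}) R ∨
    ∃ l p : V, ({l, p} : Finset V) = {u, v} ∧ p ∈ I ∧
      l ∉ spread (G.deleteEdges {s(u,v)}) R ∧
      spread G I ⊆ insert l (spread (G.deleteEdges {s(u,v)}) R) := by
  set H := G.deleteEdges {s(u,v)} with hH
  by_cases hsub : spread G I ⊆ spread H R
  · exact Or.inl hsub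
  right
  obtain ⟨w, hwmem, hwnot⟩ := Finset.not_subset.mp hsub
  have hRsp : R ⊆ spread H R := subset_spread H R
  have gapI : ∀ x, x ∈ spread G I → x ∉ spread H R →
      (x = u ∧ v ∈ I) ∨ (x = v ∧ u ∈ I) := by
    intro x hx hx'
    exact gap_lemma hx (fun c => hx' (spread_mono hIR c))
  rcases gapI w hwmem hwnot with ⟨rfl, hvI⟩ | ⟨rfl, huI⟩
  · refine ⟨w, v, rfl, hvI, hwnot, ?_⟩
    intro x hx
    by_cases hx' : x ∈ spread H R
    · exact Finset.mem_insert_of_mem hx'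
    rcases gapI x hx hx' with ⟨rfl, _⟩ | ⟨rfl, _⟩
    · exact Finset.mem_insert_self _ _
    · exact absurd (hRsp (hIR hvI)) hx'
  · refine ⟨w, u, Finset.pair_comm _ _, huI, hwnot, ?_⟩
    intro x hx
    by_cases hx' : x ∈ spread H R
    · exact Finset.mem_insert_of_mem hx'
    rcases gapI x hx hx' with ⟨rfl, _⟩ | ⟨rfl, _⟩
    · exact absurd (hRsp (hIR huI)) hx'
    · exact Finset.mem_insert_self _ _

/-- Phase 2 of the imagination strategy: once both endpoints of the deleted edge are
burned in the real game, the real game (two rounds ahead) tracks the imaginary game. -/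
lemma lemQ (turn : ℕ → Bool) (hturn : ∀ i, turn (i+2) = turn i) :
    ∀ m i (I R : Finset V), EndBy G turn i I m → I ⊆ R → u ∈ R → v ∈ R →
      EndBy (G.deleteEdges {s(u,v)}) turn (i+2) R m := by
  set H := G.deleteEdges {s(u,v)} with hH
  intro m
  induction m with
  | zero =>
    intro i I R h hIR _ _
    exact endBy_zero.mpr (Finset.univ_subset_iff.mp (endBy_zero.mp h ▸ hIR))
  | succ m ih =>
    intro i I R h hIR hu hv
    have hRsp : R ⊆ spread H R := subset_spread H R
    have hkey : spread G I ⊆ spread H R := by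
      intro x hx
      by_cases hx' : x ∈ spread H R
      · exact hx'
      rcases gap_lemma hx (fun c => hx' (spread_mono hIR c)) with ⟨rfl, _⟩ | ⟨rfl, _⟩
      · exact absurd (hRsp hu) hx'
      · exact absurd (hRsp hv) hx'
    rw [endBy_succ] at h ⊢
    rcases h with rfl | h | h
    · exact Or.inl (Finset.univ_subset_iff.mp hIR)
    · exact Or.inr (Or.inl (Finset.univ_subset_iff.mp (h ▸ hkey)))
    · by_cases hU : spread H R = Finset.univ
      · exact Or.inr (Or.inl hU)
      right; right
      rw [hturn i]
      cases hb : turn i with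
      | true =>
        rw [hb] at h; rw [if_pos rfl] at h ⊢
        obtain ⟨x, hx, hrec⟩ := h
        obtain ⟨w0, hw0⟩ := exists_not_mem_of_ne_univ hU
        by_cases hx' : x ∈ spread H R
        · refine ⟨w0, hw0, ih _ _ _ hrec ?_ (Finset.mem_insert_of_mem (hRsp hu))
            (Finset.mem_insert_of_mem (hRsp hv))⟩
          intro y hy
          rcases Finset.mem_insert.mp hy with rfl | hy
          · exact Finset.mem_insert_of_mem hx'
          · exact Finset.mem_insert_of_mem (hkey hy)
        · exact ⟨x, hx', ih _ _ _ hrec (Finset.insert_subset_insert _ hkey)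
            (Finset.mem_insert_of_mem (hRsp hu)) (Finset.mem_insert_of_mem (hRsp hv))⟩
      | false =>
        rw [hb] at h; rw [if_neg Bool.false_ne_true] at h ⊢
        intro w hw
        exact ih _ _ _ (h w (fun c => hw (hkey c)))
          (Finset.insert_subset_insert _ hkey)
          (Finset.mem_insert_of_mem (hRsp hu)) (Finset.mem_insert_of_mem (hRsp hv))

/-- Main imagination-strategy lemma: deleting an edge costs at most 2 extra rounds. -/
lemma lemP (turn : ℕ → Bool) (hturn : ∀ i, turn (i+1) = !turn i) :
    ∀ m i (I R : Finset V), EndBy G turn i I m → I ⊆ R →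
      EndBy (G.deleteEdges {s(u,v)}) turn i R (m+2) := by
  set H := G.deleteEdges {s(u,v)} with hH
  have hturn2 : ∀ i, turn (i+2) = turn i := by
    intro i
    show turn ((i+1)+1) = turn i
    rw [hturn (i+1), hturn i, Bool.not_not]
  intro m
  induction m with
  | zero =>
    intro i I R h hIR
    exact Or.inl (Finset.univ_subset_iff.mp (endBy_zero.mp h ▸ hIR))
  | succ m ih =>
    intro i I R h hIR
    have hRsp : R ⊆ spread H R := subset_spread H R
    have h' := h
    rw [endBy_succ] at h
    show EndBy H turn i R ((m+2)+1)
    rw [endBy_succ]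
    rcases h with rfl | hsp | hmv
    · exact Or.inl (Finset.univ_subset_iff.mp hIR)
    · -- imaginary spread covers everything: at most one vertex unburned in real spread
      rcases gap_cases (G := G) (u := u) (v := v) hIR with hsub | ⟨l, p, hpair, hpI, hl, hsub⟩
      · exact Or.inr (Or.inl (Finset.univ_subset_iff.mp (hsp ▸ hsub)))
      · have hcover : ∀ w, w ∉ spread H R →
            insert w (spread H R) = Finset.univ ∧ w = l := by
          intro w hw
          have hwl : w = l := by
            have : w ∈ insert l (spread H R) := hsub (hsp ▸ Finset.mem_univ w)
            rcases Finset.mem_insert.mp this with rfl | hc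
            · rfl
            · exact absurd hc hw
          subst hwl
          refine ⟨Finset.univ_subset_iff.mp ?_, rfl⟩
          intro x _
          exact hsub (hsp ▸ Finset.mem_univ x)
        right; right
        cases hb : turn i with
        | true =>
          rw [if_pos rfl]
          exact ⟨l, hl, Or.inl (hcover l hl).1⟩
        | false =>
          rw [if_neg Bool.false_ne_true]
          intro w hw
          exact Or.inl (hcover w hw).1
    · rcases gap_cases (G := G) (u := u) (v := v) hIR with hsub | ⟨l, p, hpair, hpI, hl, hsub⟩
      · -- Phase 1, no lag: mirror the imaginary game
        by_cases hU : spread H R = Finset.univ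
        · exact Or.inr (Or.inl hU)
        right; right
        cases hb : turn i with
        | true =>
          rw [hb] at hmv; rw [if_pos rfl] at hmv ⊢
          obtain ⟨x, hx, hrec⟩ := hmv
          obtain ⟨w0, hw0⟩ := exists_not_mem_of_ne_univ hU
          by_cases hx' : x ∈ spread H R
          · refine ⟨w0, hw0, ih _ _ _ hrec ?_⟩
            intro y hy
            rcases Finset.mem_insert.mp hy with rfl | hy
            · exact Finset.mem_insert_of_mem hx'
            · exact Finset.mem_insert_of_mem (hsub hy)
          · exact ⟨x, hx', ih _ _ _ hrec (Finset.insert_subset_insert _ hsub)⟩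
        | false =>
          rw [hb] at hmv; rw [if_neg Bool.false_ne_true] at hmv ⊢
          intro w hw
          exact ih _ _ _ (hmv w (fun c => hw (hsub c))) (Finset.insert_subset_insert _ hsub)
      · -- Phase 1 → Phase 2: a lag endpoint `l` appeared; freeze the imaginary game
        -- for two rounds and repair.
        have hmem : ∀ (S : Finset V), l ∈ S → p ∈ S → u ∈ S ∧ v ∈ S := by
          intro S hlS hpS
          have hu' : u ∈ ({l, p} : Finset V) := by rw [hpair]; exact Finset.mem_insert_self _ _
          have hv' : v ∈ ({l, p} : Finset V) := by
            rw [hpair]; exact Finset.mem_insert_of_mem (Finset.mem_singleton_self _)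
          constructor
          · rcases Finset.mem_insert.mp hu' with rfl | hc
            · exact hlS
            · rw [Finset.mem_singleton.mp hc]; exact hpS
          · rcases Finset.mem_insert.mp hv' with rfl | hc
            · exact hlS
            · rw [Finset.mem_singleton.mp hc]; exact hpS
        right; right
        cases hb : turn i with
        | true =>
          -- Burner's turn: burn the lag vertex `l` now.
          rw [if_pos rfl]
          refine ⟨l, hl, ?_⟩
          set R1 := insert l (spread H R) with hR1
          show EndBy H turn (i+1) R1 ((m+1)+1)
          rw [endBy_succ]
          right; right
          rw [hturn i, hb]
          rw [if_neg (by simp)]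
          intro w hw
          set R2 := insert w (spread H R1) with hR2
          have hR1R2 : R1 ⊆ R2 := fun y hy =>
            Finset.mem_insert_of_mem (subset_spread H R1 hy)
          have hlR2 : l ∈ R2 := hR1R2 (Finset.mem_insert_self _ _)
          have hpR2 : p ∈ R2 := hR1R2 (Finset.mem_insert_of_mem (hRsp (hIR hpI)))
          obtain ⟨hu2, hv2⟩ := hmem R2 hlR2 hpR2
          have hIR2 : I ⊆ R2 := fun y hy =>
            hR1R2 (Finset.mem_insert_of_mem (hRsp (hIR hy)))
          exact lemQ turn hturn2 (m+1) i I R2 h' hIR2 hu2 hv2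
        | false =>
          -- Staller's turn: let Staller move, Burner repairs next round.
          rw [if_neg Bool.false_ne_true]
          intro w hw
          set R1 := insert w (spread H R) with hR1
          show EndBy H turn (i+1) R1 ((m+1)+1)
          rw [endBy_succ]
          have hRR1 : R ⊆ R1 := fun y hy => Finset.mem_insert_of_mem (hRsp hy)
          by_cases hU1 : spread H R1 = Finset.univ
          · exact Or.inr (Or.inl hU1)
          right; right
          rw [hturn i, hb]
          rw [if_pos (by simp)]
          obtain ⟨w1, hw1⟩ := exists_not_mem_of_ne_univ hU1
          by_cases hl1 : l ∈ spread H R1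
          · refine ⟨w1, hw1, ?_⟩
            set R2 := insert w1 (spread H R1) with hR2
            have hlR2 : l ∈ R2 := Finset.mem_insert_of_mem hl1
            have hpR2 : p ∈ R2 :=
              Finset.mem_insert_of_mem (subset_spread H R1 (hRR1 (hIR hpI)))
            obtain ⟨hu2, hv2⟩ := hmem R2 hlR2 hpR2
            have hIR2 : I ⊆ R2 := fun y hy =>
              Finset.mem_insert_of_mem (subset_spread H R1 (hRR1 (hIR hy)))
            exact lemQ turn hturn2 (m+1) i I R2 h' hIR2 hu2 hv2
          · refine ⟨l, hl1, ?_⟩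
            set R2 := insert l (spread H R1) with hR2
            have hlR2 : l ∈ R2 := Finset.mem_insert_self _ _
            have hpR2 : p ∈ R2 :=
              Finset.mem_insert_of_mem (subset_spread H R1 (hRR1 (hIR hpI)))
            obtain ⟨hu2, hv2⟩ := hmem R2 hlR2 hpR2
            have hIR2 : I ⊆ R2 := fun y hy =>
              Finset.mem_insert_of_mem (subset_spread H R1 (hRR1 (hIR hy)))
            exact lemQ turn hturn2 (m+1) i I R2 h' hIR2 hu2 hv2

end Del

theorem stmt5 {V : Type*} [Fintype V] [DecidableEq V] (G : SimpleGraph V)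
    (hG : G.Connected) (e : Sym2 V) (he : e ∈ G.edgeSet) :
    (bg G ≤ bg (G.deleteEdges {e}) ∧ bg (G.deleteEdges {e}) ≤ bg G + 2) ∧
    (bg' G ≤ bg' (G.deleteEdges {e}) ∧ bg' (G.deleteEdges {e}) ≤ bg' G + 2) := by
  induction e using Sym2.ind with
  | _ u v =>
  rw [SimpleGraph.mem_edgeSet] at he
  set H := G.deleteEdges {s(u,v)} with hH
  have hHG : H ≤ G := SimpleGraph.deleteEdges_le _
  have halt0 : ∀ i : ℕ, ((i+1) % 2 == 0) = !(i % 2 == 0) := by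
    intro i
    rcases Nat.mod_two_eq_zero_or_one i with h | h <;> simp [Nat.add_mod, h]
  have halt1 : ∀ i : ℕ, ((i+1) % 2 == 1) = !(i % 2 == 1) := by
    intro i
    rcases Nat.mod_two_eq_zero_or_one i with h | h <;> simp [Nat.add_mod, h]
  have key : ∀ turn : ℕ → Bool, (∀ i, turn (i+1) = !turn i) →
      sInf {k | EndBy G turn 0 (∅ : Finset V) k} ≤ sInf {k | EndBy H turn 0 (∅ : Finset V) k} ∧
      sInf {k | EndBy H turn 0 (∅ : Finset V) k} ≤ sInf {k | EndBy G turn 0 (∅ : Finset V) k} + 2 := by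
    intro turn hturn
    have hGne : {k | EndBy G turn 0 (∅ : Finset V) k}.Nonempty :=
      ⟨(Finset.univ \ (∅ : Finset V)).card, endBy_of_card turn _ 0 ∅ le_rfl⟩
    have hHne : {k | EndBy H turn 0 (∅ : Finset V) k}.Nonempty :=
      ⟨(Finset.univ \ (∅ : Finset V)).card, endBy_of_card turn _ 0 ∅ le_rfl⟩
    constructor
    · have hmem := Nat.sInf_mem hHne
      exact Nat.sInf_le (endBy_mono hHG turn _ 0 ∅ ∅ (subset_refl _) hmem)
    · have hmem := Nat.sInf_mem hGne
      exact Nat.sInf_le (lemP (u := u) (v := v) turn hturn _ 0 ∅ ∅ hmem (subset_refl _))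
  constructor
  · have := key (fun i => i % 2 == 0) halt0
    simpa [bg, bgRel] using this
  · have := key (fun i => i % 2 == 1) halt1
    simpa [bg'] using this

end BurningGame
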